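/- Let w be a nonempty word over {L,R} starting with L, and let u be a tail (suffix) of w. Then Lu can be obtained from Lw by finitely many applications of the reduction rules LL ↦ L, RR ↦ R, LR ↦ (empty), RL ↦ (empty) applied to adjacent letters. -/
import Mathlib


/-- The alphabet of orbit pattern tags: `L` for a leftward move, `R` for a rightward move. -/
inductive Letter : Type
  | L : Letter
  | R : Letter
deriving DecidableEq

open Letter

/-- A continuous interval map `f` admits the orbit pattern tag `w` if there is an
eventually fixed orbit `x 0, x 1, ..., x w.length` of `f` (the last point being fixed,
all earlier points different from it) whose `j`-th move is labelled by the `j`-th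
letter of `w`: `L` if the orbit moves left, `R` if it moves right. -/
def Admits (f : ℝ → ℝ) (w : List Letter) : Prop :=
  ∃ x : ℕ → ℝ,
    (∀ j < w.length, f (x j) = x (j + 1)) ∧
    f (x w.length) = x w.length ∧
    (∀ j < w.length, x j ≠ x w.length) ∧
    (∀ j : Fin w.length,
      (w.get j = L ∧ x ((j : ℕ) + 1) < x (j : ℕ)) ∨
      (w.get j = R ∧ x (j : ℕ) < x ((j : ℕ) + 1)))

/-- One step of reduction on words: replace an adjacent `LL` by `L`, an adjacent `RR`
by `R`, or delete an adjacent `LR` or `RL`. -/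
inductive Red : List Letter → List Letter → Prop
  | ll (v v' : List Letter) : Red (v ++ [L, L] ++ v') (v ++ [L] ++ v')
  | rr (v v' : List Letter) : Red (v ++ [R, R] ++ v') (v ++ [R] ++ v')
  | lr (v v' : List Letter) : Red (v ++ [L, R] ++ v') (v ++ v')
  | rl (v v' : List Letter) : Red (v ++ [R, L] ++ v') (v ++ v')

/-- One derivation step: a reduction, or tail formation (passing to a suffix). -/
inductive Step : List Letter → List Letter → Prop
  | red {w u : List Letter} : Red w u → Step w u
  | tail {w u : List Letter} : u <:+ w → Step w u

/-- `u` is obtained from `w` by finitely many reductions. -/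
def Reducible : List Letter → List Letter → Prop := Relation.ReflTransGen Red

/-- `u` is derivable from `w`: finitely many reductions and tail formations, in any order. -/
def Derivable : List Letter → List Letter → Prop := Relation.ReflTransGen Step


lemma red_ll (v v' : List Letter) : Red (v ++ L :: L :: v') (v ++ L :: v') := by
  simpa using Red.ll v v'

lemma red_rr (v v' : List Letter) : Red (v ++ R :: R :: v') (v ++ R :: v') := by
  simpa using Red.rr v v'

lemma red_lr (v v' : List Letter) : Red (v ++ L :: R :: v') (v ++ v') := by
  simpa using Red.lr v v'

lemma red_rl (v v' : List Letter) : Red (v ++ R :: L :: v') (v ++ v') := by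
  simpa using Red.rl v v'

theorem lemD : ∀ (t u : List Letter), u <:+ t → Reducible (L :: L :: t) (L :: u)
  | [], u, h => by
    obtain rfl := List.suffix_nil.mp h
    exact Relation.ReflTransGen.single (by simpa using red_ll [] [])
  | L :: s, u, h => by
    rcases List.suffix_cons_iff.mp h with rfl | h'
    · exact Relation.ReflTransGen.single (by simpa using red_ll [] (L :: s))
    · exact Relation.ReflTransGen.head (by simpa using red_ll [] (L :: s)) (lemD s u h')
  | [R], u, h => by
    rcases List.suffix_cons_iff.mp h with rfl | h'
    · exact Relation.ReflTransGen.single (by simpa using red_ll [] [R])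
    · obtain rfl := List.suffix_nil.mp h'
      exact Relation.ReflTransGen.single (by simpa using red_lr [L] [])
  | R :: b :: s', u, h => by
    rcases List.suffix_cons_iff.mp h with rfl | h'
    · exact Relation.ReflTransGen.single (by simpa using red_ll [] (R :: b :: s'))
    · rcases List.suffix_cons_iff.mp h' with rfl | h''
      · exact Relation.ReflTransGen.single (by simpa using red_lr [L] (b :: s'))
      · cases b with
        | L =>
          exact Relation.ReflTransGen.head (by simpa using red_rl [L, L] s')
            (lemD s' u h'')
        | R =>
          exact Relation.ReflTransGen.head (by simpa using red_rr [L, L] s')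
            (lemD (R :: s') u (h''.trans (List.suffix_cons R s')))
  termination_by t => t.length

/-- if w starts with L and u is a suffix of w, then Lu is reducible from Lw. -/
theorem stmt9 (w u : List Letter) (hw : w.head? = some Letter.L) (hu : u <:+ w) :
    Reducible (Letter.L :: w) (Letter.L :: u) := by
  cases w with
  | nil => simp at hw
  | cons a t =>
    obtain rfl : a = Letter.L := by simpa using hw
    rcases List.suffix_cons_iff.mp hu with rfl | h'
    · exact Relation.ReflTransGen.refl
    · exact lemD t u h'
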